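/- arXiv:1207.0105 — 2 statements merged into one kernel-verified Lean document; each statement's English description precedes it below -/
import Mathlib

section
/- (Validity of the optimal one-sided IM.) Fix θ₀ > 0 and let A = (θ₀, ∞). For any true parameter value θ with 0 < θ ≤ θ₀ (i.e., θ ∈ A^c), if X is Poisson(θ)-distributed, then for every α ∈ (0,1), P{ F_{θ₀}(X − 1) ≥ 1 − α } ≤ α, where F_{θ₀}(x − 1) = ∑_{k=0}^{x-1} e^{-θ₀} θ₀^k / k! for x ≥ 1 and F_{θ₀}(−1) = 0. In other words, the optimal belief function bel_X(A) = F_{θ₀}(X − 1) is stochastically no larger than Uniform(0,1) whenever A is false. -/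
/-- The Poisson(θ) probability mass function. -/
noncomputable def poisPMF (θ : ℝ) (x : ℕ) : ℝ := Real.exp (-θ) * θ ^ x / Nat.factorial x

/-- F_{θ₀}(x − 1) = ∑_{k=0}^{x-1} e^{-θ₀} θ₀^k / k!, with F_{θ₀}(−1) = 0 when x = 0.
This is the optimal belief function for the one-sided assertion A = (θ₀, ∞). -/
noncomputable def belOneSided (θ₀ : ℝ) (x : ℕ) : ℝ := ∑ k ∈ Finset.range x, poisPMF θ₀ k

/-! Since `belOneSided θ₀` is nondecreasing, the event `1 - α ≤ belOneSided θ₀ X` is a tail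
`{X ≥ n}`, whose Poisson(θ) probability is `1 - belOneSided θ n`. The derivative of
`θ ↦ belOneSided θ (n + 1)` is `-poisPMF θ n ≤ 0` (the derivatives of the summands telescope),
so `belOneSided θ₀ n ≤ belOneSided θ n` for `θ ≤ θ₀`, and the tail probability is at most `α`. -/

open Finset

lemma poisPMF_nonneg {θ : ℝ} (hθ : 0 ≤ θ) (x : ℕ) : 0 ≤ poisPMF θ x := by
  unfold poisPMF
  positivity

lemma hasSum_poisPMF (θ : ℝ) : HasSum (poisPMF θ) 1 := by
  have h := (NormedSpace.expSeries_div_hasSum_exp θ).mul_left (Real.exp (-θ))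
  rw [← Real.exp_eq_exp_ℝ, ← Real.exp_add, neg_add_cancel, Real.exp_zero] at h
  simp only [← mul_div_assoc] at h
  exact h

lemma belOneSided_monotone {θ : ℝ} (hθ : 0 ≤ θ) : Monotone (belOneSided θ) := fun _ _ hmn =>
  sum_le_sum_of_subset_of_nonneg (range_subset_range.mpr hmn) fun k _ _ => poisPMF_nonneg hθ k

lemma hasDerivAt_poisPMF_succ (k : ℕ) (t : ℝ) :
    HasDerivAt (poisPMF · (k + 1)) (poisPMF t k - poisPMF t (k + 1)) t := by
  refine (((hasDerivAt_neg t).exp.mul (hasDerivAt_pow (k + 1) t)).div_const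
    ((k + 1).factorial : ℝ)).congr_deriv ?_
  simp only [poisPMF, Nat.factorial_succ, Nat.cast_mul, Nat.add_sub_cancel]
  field_simp
  push_cast
  ring

lemma hasDerivAt_belOneSided_succ (n : ℕ) (t : ℝ) :
    HasDerivAt (belOneSided · (n + 1)) (-poisPMF t n) t := by
  induction n with
  | zero => simpa [belOneSided, poisPMF] using (hasDerivAt_neg t).exp
  | succ n ih =>
    rw [show (belOneSided · (n + 2)) = fun s => belOneSided s (n + 1) + poisPMF s (n + 1) from
      funext fun s => sum_range_succ _ _]
    exact (ih.add (hasDerivAt_poisPMF_succ n t)).congr_deriv (by ring)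

lemma belOneSided_antitoneOn (n : ℕ) : AntitoneOn (belOneSided · n) (Set.Ici 0) := by
  cases n with
  | zero => simp [belOneSided, AntitoneOn]
  | succ n =>
    have hderiv := hasDerivAt_belOneSided_succ n
    refine antitoneOn_of_hasDerivWithinAt_nonpos (convex_Ici 0)
      (fun t _ => (hderiv t).continuousAt.continuousWithinAt)
      (fun t _ => (hderiv t).hasDerivWithinAt) fun t ht => ?_
    rw [interior_Ici] at ht
    exact neg_nonpos.mpr (poisPMF_nonneg (le_of_lt ht) n)

lemma tsum_superlevel_le_of_le_partialSum {p G : ℕ → ℝ} (hp : HasSum p 1) (hG : Monotone G)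
    (hGp : ∀ n, G n ≤ ∑ k ∈ range n, p k) {α : ℝ} (hα : 0 ≤ α) :
    ∑' x : {x // 1 - α ≤ G x}, p x ≤ α := by
  classical
  by_cases hne : ∃ x, 1 - α ≤ G x
  · set n := Nat.find hne
    have hsuperlevel : ∀ x, 1 - α ≤ G x ↔ x ∉ range n := fun x => by
      rw [mem_range, not_lt]
      exact ⟨fun hx => Nat.find_le hx, fun hx => (Nat.find_spec hne).trans (hG hx)⟩
    have htail : ∑ k ∈ range n, p k + ∑' x : {x // 1 - α ≤ G x}, p x = 1 := by
      rw [← (Equiv.subtypeEquivRight hsuperlevel).symm.tsum_eq]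
      exact (hp.summable.sum_add_tsum_subtype_compl _).trans hp.tsum_eq
    linarith [hGp n, Nat.find_spec hne]
  · rw [not_exists] at hne
    have : IsEmpty {x // 1 - α ≤ G x} := ⟨fun x => hne x x.2⟩
    rw [tsum_empty]
    exact hα

theorem one_sided_IM_valid_general (θ₀ : ℝ) (θ : ℝ) (hθ : 0 < θ) (hθθ₀ : θ ≤ θ₀)
    (α : ℝ) (hα : α ∈ Set.Ioo (0:ℝ) 1) :
    ∑' x : {x : ℕ // 1 - α ≤ belOneSided θ₀ x}, poisPMF θ x ≤ α :=
  tsum_superlevel_le_of_le_partialSum (hasSum_poisPMF θ)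
    (belOneSided_monotone (hθ.le.trans hθθ₀))
    (fun n => belOneSided_antitoneOn n hθ.le (hθ.le.trans hθθ₀) hθθ₀) hα.1.le

/-- Validity of the optimal one-sided IM: Fix θ₀ > 0 and let A = (θ₀, ∞).
For any true parameter value θ with 0 < θ ≤ θ₀ (i.e., θ ∈ A^c), if X is
Poisson(θ)-distributed, then for every α ∈ (0,1), P{ F_{θ₀}(X − 1) ≥ 1 − α } ≤ α: the
optimal belief function bel_X(A) = F_{θ₀}(X − 1) is stochastically no larger than
Uniform(0,1) whenever A is false. -/
theorem one_sided_IM_valid (θ₀ : ℝ) (hθ₀ : 0 < θ₀) (θ : ℝ) (hθ : 0 < θ) (hθθ₀ : θ ≤ θ₀)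
    (α : ℝ) (hα : α ∈ Set.Ioo (0:ℝ) 1) :
    ∑' x : {x : ℕ // 1 - α ≤ belOneSided θ₀ x}, poisPMF θ x ≤ α :=
  one_sided_IM_valid_general θ₀ θ hθ hθθ₀ α hα
end

section
/- (Proposition 1, countable-chain form.) Let (𝕌, Σ, μ) be a probability space and let S_0 ⊆ S_1 ⊆ S_2 ⊆ ⋯ be an increasing sequence of measurable subsets of 𝕌. Then there exists a set-valued map 𝒮 : (0,1) → 𝒫(𝕌), taking values in { S_n : n ∈ ℕ } ∪ { 𝕌 }, such that for every n ∈ ℕ the set { v ∈ (0,1) : 𝒮(v) ⊆ S_n } is Lebesgue measurable with Lebesgue measure exactly μ(S_n). Consequently the induced belief function attains the upper bound: P{ 𝒮 ⊆ S_n } = μ(S_n) for every n. -/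
/-!
The map is a quantile function for the chain: `𝒮 v` is the first `S n` whose mass exceeds `v`
(and `𝕌` if there is none). Since the masses `μ (S n)` increase, `𝒮 v ⊆ S n` holds exactly when
`v < μ (S n)`, so the event `{𝒮 ⊆ S n}` is the interval `(0, μ (S n))`, of Lebesgue measure
`μ (S n)`.
-/

open MeasureTheory Set

section ChainQuantile

variable {𝕌 : Type*} [MeasurableSpace 𝕌] (μ : Measure 𝕌) (S : ℕ → Set 𝕌)

open Classical in
noncomputable def chainQuantile (v : ℝ) : Set 𝕌 :=
  if h : ∃ n, v < μ.real (S n) then S (Nat.find h) else univ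

theorem chainQuantile_mem_range_union_univ (v : ℝ) :
    chainQuantile μ S v ∈ range S ∪ {univ} := by
  unfold chainQuantile
  split_ifs
  · exact Or.inl (mem_range_self _)
  · exact Or.inr rfl

variable [IsProbabilityMeasure μ]

theorem chainQuantile_subset_iff (hS : Monotone S) {v : ℝ} (hv : v < 1) (n : ℕ) :
    chainQuantile μ S v ⊆ S n ↔ v < μ.real (S n) := by
  unfold chainQuantile
  split_ifs with h
  · exact ⟨fun hsub => (Nat.find_spec h).trans_le (measureReal_mono hsub),
      fun hvn => hS (Nat.find_le hvn)⟩
  · simp only [not_exists, not_lt] at h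
    rw [univ_subset_iff]
    refine ⟨fun hn => ?_, fun hvn => absurd (h n) (not_le.2 hvn)⟩
    rwa [hn, probReal_univ]

theorem setOf_chainQuantile_subset_eq_Ioo (hS : Monotone S) (n : ℕ) :
    {v : ℝ | v ∈ Ioo (0 : ℝ) 1 ∧ chainQuantile μ S v ⊆ S n} = Ioo 0 (μ.real (S n)) := by
  ext v
  constructor
  · rintro ⟨⟨hv0, hv1⟩, hsub⟩
    exact ⟨hv0, (chainQuantile_subset_iff μ S hS hv1 n).1 hsub⟩
  · rintro ⟨hv0, hvn⟩
    have hv1 : v < 1 := hvn.trans_le measureReal_le_one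
    exact ⟨⟨hv0, hv1⟩, (chainQuantile_subset_iff μ S hS hv1 n).2 hvn⟩

end ChainQuantile

theorem exists_predictive_random_set_attaining_bound_general
    {𝕌 : Type*} [MeasurableSpace 𝕌] (μ : MeasureTheory.Measure 𝕌)
    [MeasureTheory.IsProbabilityMeasure μ]
    (S : ℕ → Set 𝕌) (hmono : Monotone S) :
    ∃ 𝒮 : ℝ → Set 𝕌,
      (∀ v ∈ Set.Ioo (0:ℝ) 1, 𝒮 v ∈ Set.range S ∪ {Set.univ}) ∧
      ∀ n : ℕ,
        MeasurableSet {v : ℝ | v ∈ Set.Ioo (0:ℝ) 1 ∧ 𝒮 v ⊆ S n} ∧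
        MeasureTheory.volume {v : ℝ | v ∈ Set.Ioo (0:ℝ) 1 ∧ 𝒮 v ⊆ S n} = μ (S n) := by
  refine ⟨chainQuantile μ S, fun v _ => chainQuantile_mem_range_union_univ μ S v, fun n => ?_⟩
  rw [setOf_chainQuantile_subset_eq_Ioo μ S hmono n, Real.volume_Ioo, sub_zero,
    ofReal_measureReal]
  exact ⟨measurableSet_Ioo, rfl⟩

/-- Proposition 1, countable-chain form: Let (𝕌, Σ, μ) be a probability
space and let S_0 ⊆ S_1 ⊆ S_2 ⊆ ⋯ be an increasing sequence of measurable subsets of 𝕌.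
Then there exists a set-valued map 𝒮 : (0,1) → 𝒫(𝕌), taking values in
{ S_n : n ∈ ℕ } ∪ { 𝕌 }, such that for every n ∈ ℕ the set { v ∈ (0,1) : 𝒮(v) ⊆ S_n }
is Lebesgue measurable with Lebesgue measure exactly μ(S_n). Consequently the induced
belief function attains the upper bound: P{ 𝒮 ⊆ S_n } = μ(S_n) for every n. -/
theorem exists_predictive_random_set_attaining_bound
    {𝕌 : Type*} [MeasurableSpace 𝕌] (μ : MeasureTheory.Measure 𝕌)
    [MeasureTheory.IsProbabilityMeasure μ]
    (S : ℕ → Set 𝕌) (hmeas : ∀ n, MeasurableSet (S n)) (hmono : Monotone S) :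
    ∃ 𝒮 : ℝ → Set 𝕌,
      (∀ v ∈ Set.Ioo (0:ℝ) 1, 𝒮 v ∈ Set.range S ∪ {Set.univ}) ∧
      ∀ n : ℕ,
        MeasurableSet {v : ℝ | v ∈ Set.Ioo (0:ℝ) 1 ∧ 𝒮 v ⊆ S n} ∧
        MeasureTheory.volume {v : ℝ | v ∈ Set.Ioo (0:ℝ) 1 ∧ 𝒮 v ⊆ S n} = μ (S n) :=
  exists_predictive_random_set_attaining_bound_general μ S hmono
end
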